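/- arXiv:2508.01939 — 7 statements merged into one kernel-verified Lean document; each statement's English description precedes it below -/
import Mathlib

section
/- Let α > -1, t ∈ (0,1) and s ≥ 0, and let D_s ⊆ 𝔻 be the open disk centered at 0 with μ(D_s) = s, i.e. the Euclidean disk of radius r with r² = s/(π+s). Then ∫_{D_s} ((1-|z|²)^{α+2} − t) dμ(z) = K_α(t) − | t(π+s) + (π/(α+1))((1+s/π)^{-α-1} − (α+2)t^{(α+1)/(α+2)}) |, where K_α(t) := πt(1 − t^{-1/(α+2)}) + (π/(α+1))(1 − t^{(α+1)/(α+2)}). -/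
open MeasureTheory Set
open scoped Real

lemma ball_int (g : ℝ → ℝ) (r : ℝ) (hr : 0 ≤ r) :
    (∫ z in Metric.ball (0 : ℂ) r, g ‖z‖) =
      2 * π * ∫ y in (0:ℝ)..r, y * g y := by
  have h1 : (∫ z in Metric.ball (0 : ℂ) r, g ‖z‖) =
      ∫ z : ℂ, (Set.Iio r).indicator g ‖z‖ := by
    rw [← integral_indicator measurableSet_ball]
    congr 1
    ext z
    by_cases h : z ∈ Metric.ball (0:ℂ) r
    · rw [indicator_of_mem h, indicator_of_mem (by simpa [mem_ball_zero_iff] using h)]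
    · rw [indicator_of_notMem h, indicator_of_notMem (by simpa [mem_ball_zero_iff] using h)]
  rw [h1, integral_fun_norm_addHaar volume ((Set.Iio r).indicator g)]
  have hdim : Module.finrank ℝ ℂ = 2 := Complex.finrank_real_complex
  rw [hdim]
  have hvol : volume.real (Metric.ball (0:ℂ) 1) = π := by
    rw [measureReal_def, Complex.volume_ball]
    simp
  rw [hvol]
  have h2 : (∫ y in Ioi (0:ℝ), y ^ (2-1) • (Set.Iio r).indicator g y) =
      ∫ y in (0:ℝ)..r, y * g y := by
    have : (fun y : ℝ => y ^ (2-1) • (Set.Iio r).indicator g y) =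
        (Set.Iio r).indicator (fun y => y * g y) := by
      ext y
      by_cases h : y ∈ Set.Iio r
      · simp [indicator_of_mem h]
      · simp [indicator_of_notMem h]
    rw [this, integral_indicator measurableSet_Iio, Measure.restrict_restrict measurableSet_Iio]
    have : Iio r ∩ Ioi 0 = Ioo 0 r := by ext y; simp [and_comm]
    rw [this]
    rw [intervalIntegral.integral_of_le hr, integral_Ioc_eq_integral_Ioo]
  rw [h2]
  simp [smul_eq_mul]
  ring

lemma ftc_int (α t r : ℝ) (hα : -1 < α) (hr0 : 0 ≤ r) (hr1 : r < 1) :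
    (∫ y in (0:ℝ)..r, y * (((1 - y ^ 2) ^ (α + 2) - t) / (1 - y ^ 2) ^ 2)) =
      (1 - (1 - r ^ 2) ^ (α + 1)) / (2 * (α + 1)) + t / 2 - t / (2 * (1 - r ^ 2)) := by
  have hα1 : α + 1 ≠ 0 := by linarith
  set F : ℝ → ℝ := fun y => -(1 / (2 * (α + 1))) * (1 - y ^ 2) ^ (α + 1)
      - (t / 2) * (1 - y ^ 2) ^ (-1 : ℝ) with hF
  have key : ∀ y ∈ uIcc (0:ℝ) r,
      HasDerivAt F (y * (((1 - y ^ 2) ^ (α + 2) - t) / (1 - y ^ 2) ^ 2)) y := by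
    intro y hy
    rw [uIcc_of_le hr0] at hy
    have hc : (0:ℝ) < 1 - y ^ 2 := by
      have h1 : |y| < 1 := by
        rw [abs_lt]; constructor <;> nlinarith [hy.1, hy.2]
      nlinarith [abs_nonneg y, sq_abs y]
    have hcne : 1 - y ^ 2 ≠ 0 := ne_of_gt hc
    have hd : HasDerivAt (fun y : ℝ => 1 - y ^ 2) (-(2 * y ^ 1)) y :=
      (hasDerivAt_pow 2 y).const_sub 1
    have h2 : HasDerivAt (fun y : ℝ => (1 - y ^ 2) ^ (α + 1))
        (-(2 * y ^ 1) * (α + 1) * (1 - y ^ 2) ^ (α + 1 - 1)) y :=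
      hd.rpow_const (Or.inl hcne)
    have h3 : HasDerivAt (fun y : ℝ => (1 - y ^ 2) ^ (-1 : ℝ))
        (-(2 * y ^ 1) * (-1) * (1 - y ^ 2) ^ ((-1 : ℝ) - 1)) y :=
      hd.rpow_const (Or.inl hcne)
    have := (h2.const_mul (-(1 / (2 * (α + 1))))).sub (h3.const_mul (t / 2))
    refine this.congr_deriv ?_
    have e1 : (1 - y ^ 2) ^ (α + 2) = (1 - y ^ 2) ^ α * (1 - y ^ 2) ^ 2 := by
      rw [show α + 2 = α + (2:ℕ) by push_cast; ring, Real.rpow_add hc, Real.rpow_natCast]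
    have e2 : (1 - y ^ 2) ^ (α + 1 - 1) = (1 - y ^ 2) ^ α := by norm_num
    have e3 : (1 - y ^ 2) ^ ((-1 : ℝ) - 1) = ((1 - y ^ 2) ^ 2)⁻¹ := by
      rw [show (-1:ℝ) - 1 = -(2:ℕ) by norm_num, Real.rpow_neg hc.le, Real.rpow_natCast]
    rw [e1, e2, e3]
    have h2ne : (1 - y ^ 2) ^ 2 ≠ 0 := pow_ne_zero 2 hcne
    field_simp
  have hcont : IntervalIntegrable
      (fun y => y * (((1 - y ^ 2) ^ (α + 2) - t) / (1 - y ^ 2) ^ 2)) volume 0 r := by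
    apply ContinuousOn.intervalIntegrable
    apply ContinuousOn.mul continuousOn_id
    apply ContinuousOn.div
    · apply ContinuousOn.sub _ continuousOn_const
      apply ContinuousOn.rpow_const
      · fun_prop
      · intro y hy
        rw [uIcc_of_le hr0] at hy
        left
        have h1 : |y| < 1 := by rw [abs_lt]; constructor <;> nlinarith [hy.1, hy.2]
        nlinarith [abs_nonneg y, sq_abs y]
    · fun_prop
    · intro y hy
      rw [uIcc_of_le hr0] at hy
      have h1 : |y| < 1 := by rw [abs_lt]; constructor <;> nlinarith [hy.1, hy.2]
      have h2 : (0:ℝ) < 1 - y ^ 2 := by nlinarith [abs_nonneg y, sq_abs y]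
      positivity
  rw [intervalIntegral.integral_eq_sub_of_hasDerivAt key hcont]
  have hc : (0:ℝ) < 1 - r ^ 2 := by nlinarith
  simp only [hF]
  rw [show (1:ℝ) - 0 ^ 2 = 1 by norm_num, Real.one_rpow, Real.one_rpow,
    Real.rpow_neg_one]
  field_simp
  ring

lemma amgm_aux (α t a : ℝ) (hα : -1 < α) (ht0 : 0 < t) (ha : 1 ≤ a) :
    (α + 2) / (α + 1) * t ^ ((α + 1) / (α + 2)) ≤ t * a + a ^ (-α - 1) / (α + 1) := by
  have ha0 : (0:ℝ) < a := by linarith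
  have hα1 : (0:ℝ) < α + 1 := by linarith
  have hα2 : (0:ℝ) < α + 2 := by linarith
  have hw : (α + 1) / (α + 2) + 1 / (α + 2) = 1 := by field_simp; ring
  have hgeo := Real.geom_mean_le_arith_mean2_weighted
    (by positivity : (0:ℝ) ≤ (α + 1) / (α + 2)) (by positivity : (0:ℝ) ≤ 1 / (α + 2))
    (by positivity : (0:ℝ) ≤ t * a) (by positivity : (0:ℝ) ≤ a ^ (-α - 1)) hw
  have hlhs : (t * a) ^ ((α + 1) / (α + 2)) * (a ^ (-α - 1)) ^ (1 / (α + 2)) =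
      t ^ ((α + 1) / (α + 2)) := by
    rw [Real.mul_rpow ht0.le ha0.le, ← Real.rpow_mul ha0.le, mul_assoc,
      ← Real.rpow_add ha0]
    have : (α + 1) / (α + 2) + (-α - 1) * (1 / (α + 2)) = 0 := by field_simp; ring
    rw [this, Real.rpow_zero, mul_one]
  rw [hlhs] at hgeo
  have h2 := mul_le_mul_of_nonneg_left hgeo (by positivity : (0:ℝ) ≤ (α + 2) / (α + 1))
  calc (α + 2) / (α + 1) * t ^ ((α + 1) / (α + 2))
      ≤ (α + 2) / (α + 1) * ((α + 1) / (α + 2) * (t * a) + 1 / (α + 2) * a ^ (-α - 1)) := h2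
    _ = t * a + a ^ (-α - 1) / (α + 1) := by field_simp

/-- Exact value of `∫_{D_s} ((1-|z|²)^{α+2} - t) dμ` over the disk `D_s` centered at `0`
of hyperbolic measure `s` (Euclidean radius `r` with `r² = s/(π+s)`):
it equals `K_α(t) - |t(π+s) + (π/(α+1))((1+s/π)^{-α-1} - (α+2)t^{(α+1)/(α+2)})|`. -/
theorem stmt4 (α : ℝ) (hα : -1 < α) (t : ℝ) (ht : t ∈ Ioo (0 : ℝ) 1) (s : ℝ) (hs : 0 ≤ s) :
    (∫ z in Metric.ball (0 : ℂ) (Real.sqrt (s / (π + s))),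
        ((1 - ‖z‖ ^ 2) ^ (α + 2) - t) / (1 - ‖z‖ ^ 2) ^ 2) =
      (π * t * (1 - t ^ (-(1 / (α + 2)))) + (π / (α + 1)) * (1 - t ^ ((α + 1) / (α + 2)))) -
        |t * (π + s) +
          (π / (α + 1)) * ((1 + s / π) ^ (-α - 1) - (α + 2) * t ^ ((α + 1) / (α + 2)))| := by
  obtain ⟨ht0, ht1⟩ := ht
  have hπ : (0:ℝ) < π := Real.pi_pos
  have hπs : (0:ℝ) < π + s := by linarith
  have hα1 : (0:ℝ) < α + 1 := by linarith
  have hα2 : (0:ℝ) < α + 2 := by linarith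
  set r := Real.sqrt (s / (π + s)) with hrdef
  have hr0 : 0 ≤ r := Real.sqrt_nonneg _
  have hr2 : r ^ 2 = s / (π + s) := Real.sq_sqrt (by positivity)
  have hfrac : s / (π + s) < 1 := (div_lt_one hπs).mpr (by linarith)
  have hr1 : r < 1 := by nlinarith [hr2, hr0]
  have hc : 1 - r ^ 2 = π / (π + s) := by rw [hr2]; field_simp; ring
  rw [ball_int (fun y => ((1 - y ^ 2) ^ (α + 2) - t) / (1 - y ^ 2) ^ 2) r hr0,
    ftc_int α t r hα hr0 hr1, hc]
  -- rewrite B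
  have hB : (1 + s / π) ^ (-α - 1) = (π / (π + s)) ^ (α + 1) := by
    rw [show (1 : ℝ) + s / π = (π + s) / π by field_simp, show -α - 1 = -(α + 1) by ring,
      Real.rpow_neg (by positivity), ← Real.inv_rpow (by positivity), inv_div]
  rw [hB]
  -- rewrite A
  have hA0 : t * t ^ (-(1 / (α + 2))) = t ^ ((α + 1) / (α + 2)) := by
    nth_rewrite 1 [← Real.rpow_one t]
    rw [← Real.rpow_add ht0, show (1 : ℝ) + -(1 / (α + 2)) = (α + 1) / (α + 2) from by
      field_simp; ring]
  have hA : π * t * (1 - t ^ (-(1 / (α + 2)))) = π * t - π * t ^ ((α + 1) / (α + 2)) := by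
    rw [mul_sub, mul_one, mul_assoc, hA0]
  rw [hA]
  set A := t ^ ((α + 1) / (α + 2)) with hAdef
  set B := (π / (π + s)) ^ (α + 1) with hBdef
  -- nonnegativity of the absolute value argument
  have hX : 0 ≤ t * (π + s) + π / (α + 1) * (B - (α + 2) * A) := by
    have ha : (1:ℝ) ≤ 1 + s / π := by
      have : 0 ≤ s / π := by positivity
      linarith
    have hkey := amgm_aux α t (1 + s / π) hα ht0 ha
    have hBa : (1 + s / π) ^ (-α - 1) = B := hB
    rw [hBa] at hkey
    rw [← hAdef] at hkey
    have heq : t * (π + s) + π / (α + 1) * (B - (α + 2) * A) =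
        π * (t * (1 + s / π) + B / (α + 1)) - π * ((α + 2) / (α + 1) * A) := by
      field_simp; ring
    rw [heq, sub_nonneg]
    exact mul_le_mul_of_nonneg_left hkey hπ.le
  rw [abs_of_nonneg hX]
  have hBpos : 0 < B := by rw [hBdef]; positivity
  field_simp
  ring
end

section
/- Let U ⊆ ℂ be open, let f₁, …, f_n be holomorphic on U, let p₁, …, p_n ≥ 0, and set φ(z) := Σ_{j=1}^n p_j |f_j(z)|². Let w ∈ U and r > 0 be such that the closed disk {z : |z−w| ≤ r} is contained in U and φ > 0 on this closed disk. Then log φ(w) ≤ (1/(2π)) ∫_0^{2π} log φ(w + r e^{iθ}) dθ. -/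
open MeasureTheory Set
open scoped Real

open scoped ComplexConjugate

instance fact_two_pi_pos : Fact ((0:ℝ) < 2*π) := ⟨Real.two_pi_pos⟩

/-- Sub-mean-value property of `log φ` for `φ = Σ p_j |f_j|²` with `f_j` holomorphic and
`p_j ≥ 0`: if `φ > 0` on the closed disk `|z-w| ≤ r ⊆ U`, then
`log φ(w) ≤ (1/2π) ∫₀^{2π} log φ(w + re^{iθ}) dθ`. -/
theorem stmt8 (U : Set ℂ) (hU : IsOpen U) (n : ℕ) (f : Fin n → ℂ → ℂ)
    (hf : ∀ j, DifferentiableOn ℂ (f j) U)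
    (p : Fin n → ℝ) (hp : ∀ j, 0 ≤ p j)
    (w : ℂ) (r : ℝ) (hr : 0 < r) (hball : Metric.closedBall w r ⊆ U)
    (hpos : ∀ z ∈ Metric.closedBall w r, 0 < ∑ j, p j * ‖f j z‖ ^ 2) :
    Real.log (∑ j, p j * ‖f j w‖ ^ 2) ≤
      (1 / (2 * π)) * ∫ θ in (0 : ℝ)..(2 * π),
        Real.log (∑ j, p j *
          ‖f j (w + (r : ℂ) * Complex.exp (θ * Complex.I))‖ ^ 2) := by
  classical
  have hπ : (0:ℝ) < 2*π := Real.two_pi_pos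
  have hrC : (r : ℂ) ≠ 0 := Complex.ofReal_ne_zero.mpr hr.ne'
  set φ : ℂ → ℝ := fun z => ∑ j, p j * ‖f j z‖ ^ 2 with hφdef
  set u₀ : ℝ → ℝ := fun θ =>
    Real.log (φ (w + (r : ℂ) * Complex.exp ((θ:ℂ) * Complex.I))) with hu₀def
  -- basic membership facts
  have hmem : ∀ θ : ℝ, w + (r:ℂ) * Complex.exp ((θ:ℂ) * Complex.I) ∈ Metric.closedBall w r := by
    intro θ
    simp [Metric.mem_closedBall, dist_eq_norm, map_mul,
      Complex.norm_exp_ofReal_mul_I, abs_of_pos hr]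
  -- continuity of φ on U
  have hφc : ContinuousOn φ U := by
    apply continuousOn_finset_sum
    intro j _
    exact continuousOn_const.mul ((continuous_norm.comp_continuousOn
      (hf j).continuousOn).pow 2)
  -- continuity of u₀
  have hcm : Continuous fun θ : ℝ => w + (r:ℂ) * Complex.exp ((θ:ℂ) * Complex.I) := by
    continuity
  have hu₀c : Continuous u₀ := by
    apply Real.continuousOn_log.comp_continuous
      (hφc.comp_continuous hcm (fun θ => hball (hmem θ)))
    exact fun θ => (hpos _ (hmem θ)).ne'
  -- main estimate, for every ε > 0
  have key : ∀ ε > (0:ℝ), Real.log (φ w) ≤ (1/(2*π)) * (∫ θ in (0:ℝ)..(2*π), u₀ θ) + ε := by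
    intro ε hε
    set δ : ℝ := ε/2 with hδdef
    have hδ : 0 < δ := half_pos hε
    -- the continuous boundary data as a map on AddCircle (2π)
    have hcoe : ∀ θ : ℝ, ((AddCircle.toCircle (θ : AddCircle (2*π)) : Circle) : ℂ)
        = Complex.exp ((θ:ℂ) * Complex.I) := by
      intro θ
      rw [AddCircle.toCircle_apply_mk, Circle.coe_exp]
      congr 1
      have h : 2*π/(2*π) = (1:ℝ) := div_self hπ.ne'
      rw [h, one_mul]
    have hecont : Continuous fun x : AddCircle (2*π) =>
        w + (r:ℂ) * (AddCircle.toCircle x : ℂ) := by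
      exact continuous_const.add (continuous_const.mul
        (continuous_subtype_val.comp AddCircle.continuous_toCircle))
    have hesph : ∀ x : AddCircle (2*π),
        w + (r:ℂ) * (AddCircle.toCircle x : ℂ) ∈ Metric.closedBall w r := by
      intro x
      simp [Metric.mem_closedBall, dist_eq_norm, map_mul,
        Circle.norm_coe, abs_of_pos hr]
    set u : C(AddCircle (2*π), ℂ) :=
      ⟨fun x => ((Real.log (φ (w + (r:ℂ) * (AddCircle.toCircle x : ℂ)))) : ℂ), by
        apply Complex.continuous_ofReal.comp
        apply Real.continuousOn_log.comp_continuous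
          (hφc.comp_continuous hecont (fun x => hball (hesph x)))
        exact fun x => (hpos _ (hesph x)).ne'⟩ with hudef
    -- Fourier approximation
    have h1 : u ∈ (Submodule.span ℂ (Set.range (@fourier (2*π)))).topologicalClosure :=
      (span_fourier_closure_eq_top (T := 2*π)).symm ▸ Submodule.mem_top
    have h2 : u ∈ closure ((Submodule.span ℂ (Set.range (@fourier (2*π))) :
        Submodule ℂ _) : Set _) := h1
    obtain ⟨g, hg, hgu⟩ := SeminormedAddCommGroup.mem_closure_iff.mp h2 δ hδ
    obtain ⟨c, rfl⟩ := Finsupp.mem_span_range_iff_exists_finsupp.mp hg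
    -- the trigonometric polynomial, as a function of the angle
    set t : ℝ → ℂ := fun θ => ∑ k ∈ c.support, c k * Complex.exp ((k:ℂ) * θ * Complex.I)
      with htdef
    have hfour : ∀ (k : ℤ) (θ : ℝ),
        fourier (T := 2*π) k (θ : AddCircle (2*π)) = Complex.exp ((k:ℂ) * θ * Complex.I) := by
      intro k θ
      rw [fourier_coe_apply]
      have hπ' : (π:ℂ) ≠ 0 := Complex.ofReal_ne_zero.mpr Real.pi_ne_zero
      congr 1
      rw [Complex.ofReal_mul, Complex.ofReal_ofNat, div_eq_iff (by simp [hπ'] : (2*(π:ℂ)) ≠ 0)]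
      ring
    have hgθ : ∀ θ : ℝ, (c.sum fun i a => a • fourier i) ((θ : AddCircle (2*π))) = t θ := by
      intro θ
      rw [Finsupp.sum]
      simp only [ContinuousMap.coe_sum, Finset.sum_apply, ContinuousMap.smul_apply, smul_eq_mul]
      exact Finset.sum_congr rfl fun k _ => by rw [hfour k θ]
    -- pointwise approximation of `u₀` by `Re t`
    have hre : ∀ θ : ℝ, |(t θ).re - u₀ θ| ≤ δ := by
      intro θ
      have huθ : u ((θ : AddCircle (2*π))) = ((u₀ θ : ℝ) : ℂ) := by
        simp only [hudef, ContinuousMap.coe_mk, hu₀def]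
        rw [hcoe θ]
      have h3 : ‖u - c.sum fun i a => a • fourier i‖ ≤ δ := hgu.le
      have h4 := ContinuousMap.norm_coe_le_norm (u - c.sum fun i a => a • fourier i)
        ((θ : AddCircle (2*π)))
      rw [ContinuousMap.sub_apply, huθ, hgθ θ] at h4
      have h5 : ‖((u₀ θ : ℝ) : ℂ) - t θ‖ ≤ δ := le_trans h4 h3
      calc |(t θ).re - u₀ θ| = |(((u₀ θ : ℝ) : ℂ) - t θ).re| := by
            simp [Complex.sub_re, abs_sub_comm]
        _ ≤ ‖((u₀ θ : ℝ) : ℂ) - t θ‖ := Complex.abs_re_le_norm _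
        _ ≤ δ := h5
    -- the holomorphic polynomial q with Re q = Re t on the circle
    set dd : ℤ → ℂ → ℂ := fun k z =>
      if k = 0 then (((c 0).re : ℝ) : ℂ)
      else if 0 < k then c k * ((z - w)/r)^(k.toNat)
      else (conj (c k)) * ((z - w)/r)^((-k).toNat) with hdddef
    set q : ℂ → ℂ := fun z => ∑ k ∈ c.support, dd k z with hqdef
    have hqd : Differentiable ℂ q := by
      apply Differentiable.fun_sum
      intro k _
      simp only [hdddef]
      split_ifs with h h'
      · exact differentiable_const _
      · exact (differentiable_const _).mul
          (((differentiable_id.sub_const w).div_const (r:ℂ)).pow _)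
      · exact (differentiable_const _).mul
          (((differentiable_id.sub_const w).div_const (r:ℂ)).pow _)
    -- Re q on the circle equals Re t
    have hcirc : ∀ θ : ℝ,
        (q (w + (r:ℂ) * Complex.exp ((θ:ℂ) * Complex.I))).re = (t θ).re := by
      intro θ
      have hz : (w + (r:ℂ) * Complex.exp ((θ:ℂ) * Complex.I) - w)/(r:ℂ)
          = Complex.exp ((θ:ℂ) * Complex.I) := by
        field_simp
        ring
      simp only [hqdef, htdef, Complex.re_sum]
      apply Finset.sum_congr rfl
      intro k _
      simp only [hdddef, hz]
      split_ifs with h h'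
      · subst h; simp
      · have hcast : ((k.toNat : ℕ) : ℂ) = (k : ℂ) := by
          exact_mod_cast Int.toNat_of_nonneg h'.le
        have hpow : Complex.exp ((θ:ℂ) * Complex.I) ^ (k.toNat)
            = Complex.exp ((k:ℂ) * θ * Complex.I) := by
          rw [← Complex.exp_nat_mul]
          congr 1
          rw [hcast]
          ring
        rw [hpow]
      · have hk : k < 0 := lt_of_le_of_ne (not_lt.mp h') h
        have hcast : (((-k).toNat : ℕ) : ℂ) = -(k : ℂ) := by
          exact_mod_cast Int.toNat_of_nonneg (by omega : (0:ℤ) ≤ -k)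
        have hpow : Complex.exp ((θ:ℂ) * Complex.I) ^ ((-k).toNat)
            = Complex.exp (-(k:ℂ) * θ * Complex.I) := by
          rw [← Complex.exp_nat_mul]
          congr 1
          rw [hcast]
          ring
        rw [hpow]
        have hconj : conj (c k) * Complex.exp (-(k:ℂ) * θ * Complex.I)
            = conj (c k * Complex.exp ((k:ℂ) * θ * Complex.I)) := by
          rw [map_mul, ← Complex.exp_conj]
          congr 2
          simp [Complex.conj_I]
        rw [hconj, Complex.conj_re]
    -- value at the center
    have hqw : (q w).re = (c 0).re := by
      have hterm : ∀ k : ℤ, dd k w = if k = 0 then (((c 0).re : ℝ) : ℂ) else 0 := by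
        intro k
        simp only [hdddef]
        split_ifs with h h'
        · rfl
        · rw [sub_self, zero_div, zero_pow (by omega : k.toNat ≠ 0), mul_zero]
        · have hk : k < 0 := lt_of_le_of_ne (not_lt.mp h') h
          rw [sub_self, zero_div, zero_pow (by omega : (-k).toNat ≠ 0), mul_zero]
      simp only [hqdef]
      rw [Finset.sum_congr rfl fun k _ => hterm k, Finset.sum_ite_eq' c.support 0
        (fun _ => (((c 0).re : ℝ) : ℂ))]
      split_ifs with h
      · simp
      · simp [Finsupp.notMem_support_iff.mp h]
    -- the holomorphic comparison function
    set G : ℂ → ℂ := fun z => ∑ j, (p j : ℂ) * conj (f j w) * f j z with hGdef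
    have hGw : G w = ((φ w : ℝ) : ℂ) := by
      simp only [hGdef, hφdef]
      push_cast
      apply Finset.sum_congr rfl
      intro j _
      rw [mul_assoc, mul_comm (conj (f j w)), Complex.mul_conj, Complex.normSq_eq_norm_sq]
      push_cast
      ring
    have hGb : ∀ z, ‖G z‖^2 ≤ φ w * φ z := by
      intro z
      have h1 : ‖G z‖ ≤ ∑ j, p j * ‖f j w‖ * ‖f j z‖ := by
        refine le_trans (norm_sum_le _ _) (Finset.sum_le_sum fun j _ => ?_)
        rw [norm_mul, norm_mul, Complex.norm_real, Real.norm_eq_abs, Complex.norm_conj, abs_of_nonneg (hp j)]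
      have h2 : (∑ j, p j * ‖f j w‖ * ‖f j z‖)^2 ≤ φ w * φ z := by
        simp only [hφdef]
        apply Finset.sum_sq_le_sum_mul_sum_of_sq_eq_mul
        · exact fun j _ => mul_nonneg (hp j) (sq_nonneg _)
        · exact fun j _ => mul_nonneg (hp j) (sq_nonneg _)
        · intro j _
          ring
      calc ‖G z‖^2 ≤ (∑ j, p j * ‖f j w‖ * ‖f j z‖)^2 := by
            apply pow_le_pow_left₀ (norm_nonneg _) h1
        _ ≤ φ w * φ z := h2
    set F : ℂ → ℂ := fun z => (G z)^2 * Complex.exp (-(q z)) with hFdef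
    -- maximum modulus
    have hFd : DiffContOnCl ℂ F (Metric.ball w r) := by
      apply DifferentiableOn.diffContOnCl
      rw [closure_ball w hr.ne']
      have hGd : DifferentiableOn ℂ G U := by
        apply DifferentiableOn.fun_sum
        intro j _
        exact (hf j).const_mul _
      have : DifferentiableOn ℂ F U :=
        ((hGd.pow 2).mul ((hqd.neg.cexp).differentiableOn))
      exact this.mono hball
    have hfr : ∀ z ∈ frontier (Metric.ball w r), ‖F z‖ ≤ φ w * Real.exp δ := by
      intro z hz
      rw [frontier_ball w hr.ne'] at hz
      have habs : ‖z - w‖ = r := by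
        rw [mem_sphere_iff_norm] at hz
        exact hz
      set θ : ℝ := Complex.arg (z - w) with hθdef
      have hzw : z = w + (r:ℂ) * Complex.exp ((θ:ℂ) * Complex.I) := by
        have h := Complex.norm_mul_exp_arg_mul_I (z - w)
        rw [habs] at h
        rw [hθdef]
        linear_combination -h
      have hzball : z ∈ Metric.closedBall w r := by
        rw [hzw]; exact hmem θ
      have hφz : 0 < φ z := hpos z hzball
      have hqz : u₀ θ - δ ≤ (q z).re := by
        have h6 := hre θ
        have h7 : (q z).re = (t θ).re := by rw [hzw]; exact hcirc θ
        rw [h7]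
        have := abs_le.mp h6
        linarith [this.1]
      have hu₀θ : u₀ θ = Real.log (φ z) := by
        simp only [hu₀def]
        rw [← hzw]
      have hnorm : ‖F z‖ = ‖G z‖^2 * Real.exp (-(q z).re) := by
        simp only [hFdef, norm_mul, norm_pow, Complex.norm_exp,
          Complex.neg_re]
      rw [hnorm]
      have hexp : Real.exp (-(q z).re) ≤ Real.exp δ / φ z := by
        have hd : Real.exp δ / φ z = Real.exp (δ - Real.log (φ z)) := by
          rw [Real.exp_sub, Real.exp_log hφz]
        rw [hd]
        apply Real.exp_le_exp.mpr
        rw [hu₀θ] at hqz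
        linarith
      calc ‖G z‖^2 * Real.exp (-(q z).re)
          ≤ (φ w * φ z) * (Real.exp δ / φ z) := by
            apply mul_le_mul (hGb z) hexp (Real.exp_pos _).le
            exact mul_nonneg (hpos w (Metric.mem_closedBall_self hr.le)).le hφz.le
        _ = φ w * Real.exp δ := by
            field_simp
    have hφw : 0 < φ w := hpos w (Metric.mem_closedBall_self hr.le)
    have hFw : ‖F w‖ ≤ φ w * Real.exp δ := by
      apply Complex.norm_le_of_forall_mem_frontier_norm_le Metric.isBounded_ball hFd hfr
      rw [closure_ball w hr.ne']
      exact Metric.mem_closedBall_self hr.le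
    have hFweq : ‖F w‖ = (φ w)^2 * Real.exp (-(q w).re) := by
      simp only [hFdef, norm_mul, norm_pow, Complex.norm_exp, Complex.neg_re]
      rw [hGw, Complex.norm_real, Real.norm_eq_abs, abs_of_pos hφw]
    -- log φ(w) ≤ δ + Re q(w)
    have hlog : Real.log (φ w) ≤ δ + (q w).re := by
      rw [hFweq] at hFw
      have h8 : φ w * Real.exp (-(q w).re) ≤ Real.exp δ := by
        have := hFw
        rw [pow_two, mul_assoc] at this
        exact le_of_mul_le_mul_left this hφw
      rw [Real.exp_neg] at h8
      have h9 : φ w ≤ Real.exp (δ + (q w).re) := by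
        rw [Real.exp_add]
        calc φ w = φ w * (Real.exp ((q w).re))⁻¹ * Real.exp ((q w).re) := by
              field_simp
          _ ≤ Real.exp δ * Real.exp ((q w).re) :=
              mul_le_mul_of_nonneg_right h8 (Real.exp_pos _).le
      exact (Real.log_le_iff_le_exp hφw).mpr h9
    -- the circle average of Re q is Re c₀
    have htk : ∀ k : ℤ, Continuous fun θ : ℝ => c k * Complex.exp ((k:ℂ) * θ * Complex.I) := by
      intro k
      exact continuous_const.mul (Complex.continuous_exp.comp
        ((continuous_const.mul Complex.continuous_ofReal).mul continuous_const))
    have htcont : Continuous t := by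
      apply continuous_finset_sum
      intro k _
      exact htk k
    have htint : IntervalIntegrable t volume 0 (2*π) := htcont.intervalIntegrable _ _
    have hI : (∫ θ in (0:ℝ)..(2*π), t θ) = 2*π*(c 0) := by
      simp only [htdef]
      rw [intervalIntegral.integral_finset_sum (fun k _ => (htk k).intervalIntegrable _ _)]
      have hterm : ∀ k ∈ c.support, (∫ θ in (0:ℝ)..(2*π), c k * Complex.exp ((k:ℂ) * θ * Complex.I))
          = if k = 0 then 2*π*(c 0) else 0 := by
        intro k _
        rw [intervalIntegral.integral_const_mul]
        split_ifs with h
        · subst h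
          have h0 : (fun θ : ℝ => Complex.exp (((0:ℤ):ℂ) * θ * Complex.I))
              = fun _ : ℝ => (1:ℂ) := by
            funext θ; simp
          rw [h0, intervalIntegral.integral_const, sub_zero, Complex.real_smul,
            Complex.ofReal_mul]
          push_cast
          ring
        · have hkI : ((k:ℂ) * Complex.I) ≠ 0 :=
            mul_ne_zero (Int.cast_ne_zero.mpr h) Complex.I_ne_zero
          have : (fun θ : ℝ => Complex.exp ((k:ℂ) * θ * Complex.I))
              = fun θ : ℝ => Complex.exp (((k:ℂ) * Complex.I) * θ) := by
            funext θ; ring_nf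
          rw [this, integral_exp_mul_complex hkI]
          have h2pi : Complex.exp ((k:ℂ) * Complex.I * ((2*π:ℝ):ℂ)) = 1 := by
            have := Complex.exp_int_mul_two_pi_mul_I k
            rw [← this]
            congr 1
            push_cast
            ring
          rw [h2pi]
          simp
      rw [Finset.sum_congr rfl hterm, Finset.sum_ite_eq' c.support 0 (fun _ => 2*π*(c 0))]
      split_ifs with h
      · rfl
      · rw [Finsupp.notMem_support_iff.mp h]
        simp
    have hIre : (∫ θ in (0:ℝ)..(2*π), (t θ).re) = 2*π*(c 0).re := by
      have := Complex.reCLM.intervalIntegral_comp_comm htint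
      simp only [Complex.reCLM_apply] at this
      rw [this, hI]
      simp [Complex.mul_re]
    -- comparison of integrals
    have hmono : (∫ θ in (0:ℝ)..(2*π), (t θ).re) ≤ (∫ θ in (0:ℝ)..(2*π), (u₀ θ + δ)) := by
      apply intervalIntegral.integral_mono_on hπ.le
      · exact (Complex.continuous_re.comp htcont).intervalIntegrable _ _
      · exact (hu₀c.add continuous_const).intervalIntegrable _ _
      · intro θ _
        have := abs_le.mp (hre θ)
        linarith [this.2]
    have hintu : (∫ θ in (0:ℝ)..(2*π), (u₀ θ + δ))
        = (∫ θ in (0:ℝ)..(2*π), u₀ θ) + 2*π*δ := by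
      rw [intervalIntegral.integral_add (hu₀c.intervalIntegrable _ _)
        (intervalIntegrable_const)]
      rw [intervalIntegral.integral_const]
      simp

    -- put everything together
    have hc0 : (c 0).re ≤ (1/(2*π)) * (∫ θ in (0:ℝ)..(2*π), u₀ θ) + δ := by
      have h10 : 2*π*(c 0).re ≤ (∫ θ in (0:ℝ)..(2*π), u₀ θ) + 2*π*δ := by
        rw [← hIre, ← hintu]; exact hmono
      have h11 : (c 0).re ≤ ((∫ θ in (0:ℝ)..(2*π), u₀ θ) + 2*π*δ)/(2*π) := by
        rw [le_div_iff₀ hπ]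
        linarith [h10]
      have h12 : ((∫ θ in (0:ℝ)..(2*π), u₀ θ) + 2*π*δ)/(2*π)
          = (1/(2*π)) * (∫ θ in (0:ℝ)..(2*π), u₀ θ) + δ := by
        field_simp
      linarith [h11, h12.ge]
    calc Real.log (φ w) ≤ δ + (q w).re := hlog
      _ = δ + (c 0).re := by rw [hqw]
      _ ≤ δ + ((1/(2*π)) * (∫ θ in (0:ℝ)..(2*π), u₀ θ) + δ) := by linarith [hc0]
      _ = (1/(2*π)) * (∫ θ in (0:ℝ)..(2*π), u₀ θ) + ε := by rw [hδdef]; ring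
  exact le_of_forall_pos_le_add key
end

section
/- Let H be a complex inner product space (inner product ⟨·,·⟩ linear in the first variable) and let f, g ∈ H with ‖f‖ = ‖g‖ = 1. Define T : H → H by T x := ⟨x, f⟩ f − ⟨x, g⟩ g. If T x = λ x for some x ∈ H with x ≠ 0 and some scalar λ ∈ ℂ with λ ≠ 0, then λ² = 1 − |⟨f, g⟩|². -/
/-- Eigenvalues of `T x = ⟨x,f⟩f - ⟨x,g⟩g` (inner product linear in the first variable,
i.e. `⟨x,y⟩ = inner y x` in Mathlib's convention) for unit vectors `f, g`: any nonzero
eigenvalue `λ` satisfies `λ² = 1 - |⟨f,g⟩|²`. -/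
theorem stmt11 {H : Type*} [NormedAddCommGroup H] [InnerProductSpace ℂ H]
    (f g : H) (hf : ‖f‖ = 1) (hg : ‖g‖ = 1)
    (x : H) (hx : x ≠ 0) (lam : ℂ) (hlam : lam ≠ 0)
    (heig : (inner ℂ f x : ℂ) • f - (inner ℂ g x : ℂ) • g = lam • x) :
    lam ^ 2 = ((1 - ‖(inner ℂ g f : ℂ)‖ ^ 2 : ℝ) : ℂ) := by
  set a : ℂ := inner ℂ f x with ha
  set b : ℂ := inner ℂ g x with hb
  set c : ℂ := inner ℂ f g with hc
  have hff : (inner ℂ f f : ℂ) = 1 := by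
    rw [inner_self_eq_norm_sq_to_K, hf]; norm_num
  have hgg : (inner ℂ g g : ℂ) = 1 := by
    rw [inner_self_eq_norm_sq_to_K, hg]; norm_num
  have hgf : (inner ℂ g f : ℂ) = starRingEnd ℂ c := by rw [← inner_conj_symm]
  have eq1 : a - b * c = lam * a := by
    have h := congrArg (fun y => (inner ℂ f y : ℂ)) heig
    simp only [inner_sub_right, inner_smul_right, hff, mul_one, ← ha, ← hb, ← hc] at h
    exact h
  have eq2 : a * starRingEnd ℂ c - b = lam * b := by
    have h := congrArg (fun y => (inner ℂ g y : ℂ)) heig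
    simp only [inner_sub_right, inner_smul_right, hgg, mul_one, hgf, ← ha, ← hb] at h
    exact h
  have habs : ((1 - ‖(inner ℂ g f : ℂ)‖ ^ 2 : ℝ) : ℂ) = 1 - c * starRingEnd ℂ c := by
    rw [hgf, Complex.norm_conj]
    push_cast
    rw [Complex.mul_conj]
    norm_cast
    rw [Complex.sq_norm]
  rw [habs]
  by_cases hA : a = 0
  · have hbne : b ≠ 0 := by
      intro hB
      apply hx
      have : lam • x = 0 := by rw [← heig, hA, hB]; simp
      rcases smul_eq_zero.mp this with h | h
      · exact absurd h hlam
      · exact h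
    have hc0 : c = 0 := by
      have : b * c = 0 := by
        have := eq1; rw [hA] at this; linear_combination -this
      rcases mul_eq_zero.mp this with h | h
      · exact absurd h hbne
      · exact h
    have hlam1 : lam = -1 := by
      have h2 : (lam + 1) * b = 0 := by
        have := eq2; rw [hA] at this; linear_combination -this
      rcases mul_eq_zero.mp h2 with h | h
      · linear_combination h
      · exact absurd h hbne
    rw [hlam1, hc0]; ring
  · by_cases hB : b = 0
    · have hc0 : c = 0 := by
        have : a * starRingEnd ℂ c = 0 := by
          have := eq2; rw [hB] at this; linear_combination this
        rcases mul_eq_zero.mp this with h | h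
        · exact absurd h hA
        · simpa using congrArg (starRingEnd ℂ) h
      have hlam1 : lam = 1 := by
        have h1 : (lam - 1) * a = 0 := by
          have := eq1; rw [hB] at this; linear_combination -this
        rcases mul_eq_zero.mp h1 with h | h
        · linear_combination h
        · exact absurd h hA
      rw [hlam1, hc0]; ring
    · have key : (1 - lam ^ 2) * (a * b) = (c * starRingEnd ℂ c) * (a * b) := by
        linear_combination (b * (1 + lam)) * eq1 - (b * c) * eq2
      have hab : a * b ≠ 0 := mul_ne_zero hA hB
      have := mul_right_cancel₀ hab key
      linear_combination -this
end

section
/- For every α > -1 and every t ∈ [0,1] one has (α+1)t + 1 − (α+2)t^{(α+1)/(α+2)} ≥ ((α+1)/(2(α+2)))·(1−t)². -/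
/-- Elementary inequality: for `α > -1` and `t ∈ [0,1]`,
`(α+1)t + 1 - (α+2)t^{(α+1)/(α+2)} ≥ ((α+1)/(2(α+2)))(1-t)²`. -/
theorem stmt13 (α : ℝ) (hα : -1 < α) (t : ℝ) (ht : t ∈ Set.Icc (0 : ℝ) 1) :
    ((α + 1) / (2 * (α + 2))) * (1 - t) ^ 2 ≤
      (α + 1) * t + 1 - (α + 2) * t ^ ((α + 1) / (α + 2)) := by
  obtain ⟨ht0, ht1⟩ := ht
  have h1 : (0:ℝ) < α + 1 := by linarith
  have h2 : (0:ℝ) < α + 2 := by linarith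
  set β : ℝ := (α + 1) / (α + 2) with hβ
  have hβ0 : 0 < β := div_pos h1 h2
  have hβ1 : β < 1 := by rw [hβ, div_lt_one h2]; linarith
  have hmul : (α + 2) * β = α + 1 := by rw [hβ]; field_simp
  -- the function
  set F : ℝ → ℝ := fun x => (α + 1) * x + 1 - (α + 2) * x ^ β - (β / 2) * (1 - x) ^ 2
    with hF
  have hcont : ContinuousOn F (Set.Icc 0 1) := by
    apply ContinuousOn.sub
    apply ContinuousOn.sub
    · exact (continuousOn_const.mul continuousOn_id).add continuousOn_const
    · exact continuousOn_const.mul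
        (fun x _ => (Real.continuousAt_rpow_const x β (Or.inr hβ0.le)).continuousWithinAt)
    · fun_prop
  -- derivative on the interior
  have hHD : ∀ x ∈ Set.Ioo (0:ℝ) 1,
      HasDerivAt F ((α + 1) - (α + 2) * (β * x ^ (β - 1)) + (β / 2) * (2 * (1 - x))) x := by
    intro x hx
    have hrp : HasDerivAt (fun y : ℝ => y ^ β) (β * x ^ (β - 1)) x :=
      Real.hasDerivAt_rpow_const (Or.inl hx.1.ne')
    have h3 : HasDerivAt (fun y : ℝ => (α + 1) * y + 1 - (α + 2) * y ^ β)
        ((α + 1) - (α + 2) * (β * x ^ (β - 1))) x := by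
      simpa [Pi.sub_def] using (((hasDerivAt_id x).const_mul (α + 1)).add_const 1).sub
        (hrp.const_mul (α + 2))
    have h4 : HasDerivAt (fun y : ℝ => (β / 2) * (1 - y) ^ 2)
        (-((β / 2) * (2 * (1 - x)))) x := by
      have h5 : HasDerivAt (fun y : ℝ => (1 - y) ^ 2) (2 * (1 - x) ^ 1 * (0 - 1)) x :=
        ((hasDerivAt_const x (1:ℝ)).sub (hasDerivAt_id x)).pow 2
      have := h5.const_mul (β / 2)
      rw [show -((β / 2) * (2 * (1 - x))) = β / 2 * (2 * (1 - x) ^ 1 * (0 - 1)) by ring]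
      exact this
    simpa [Pi.sub_def] using h3.sub h4
  -- derivative is nonpositive on the interior
  have hderiv : ∀ x ∈ interior (Set.Icc (0:ℝ) 1), deriv F x ≤ 0 := by
    intro x hx
    rw [interior_Icc] at hx
    obtain ⟨hx0, hx1⟩ := hx
    rw [(hHD x ⟨hx0, hx1⟩).deriv]
    -- Bernoulli : x ^ (β - 1) ≥ 1 + (1 - β) * (1 - x)
    have hp0 : 0 ≤ 1 - β := by linarith
    have hbern : x ^ (1 - β) ≤ 1 - (1 - β) * (1 - x) := by
      have := rpow_one_add_le_one_add_mul_self (s := x - 1) (by linarith) hp0 (by linarith)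
      calc x ^ (1 - β) = (1 + (x - 1)) ^ (1 - β) := by ring_nf
        _ ≤ 1 + (1 - β) * (x - 1) := this
        _ = 1 - (1 - β) * (1 - x) := by ring
    have hxp : 0 < x ^ (1 - β) := Real.rpow_pos_of_pos hx0 _
    have hkey : 1 + (1 - β) * (1 - x) ≤ x ^ (β - 1) := by
      have hinv : x ^ (β - 1) = (x ^ (1 - β))⁻¹ := by
        rw [← Real.rpow_neg hx0.le]; ring_nf
      rw [hinv, le_inv_comm₀ (by nlinarith) hxp]
      calc x ^ (1 - β) ≤ 1 - (1 - β) * (1 - x) := hbern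
        _ ≤ (1 + (1 - β) * (1 - x))⁻¹ := by
            rw [inv_eq_one_div, le_div_iff₀ (by nlinarith)]
            nlinarith [sq_nonneg ((1 - β) * (1 - x))]
    have hβeq : (α + 1) * (1 - β) = β := by rw [hβ]; field_simp; ring
    nlinarith [mul_le_mul_of_nonneg_left hkey h1.le]
  have hanti : AntitoneOn F (Set.Icc 0 1) := by
    apply antitoneOn_of_deriv_nonpos (convex_Icc 0 1) hcont _ hderiv
    intro x hx
    rw [interior_Icc] at hx
    exact ((hHD x hx).differentiableAt.differentiableWithinAt)
  have h10 : F 1 = 0 := by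
    simp [hF, Real.one_rpow]; ring
  have := hanti ⟨ht0, ht1⟩ (Set.right_mem_Icc.mpr zero_le_one) ht1
  rw [h10] at this
  have hFt : F t = (α + 1) * t + 1 - (α + 2) * t ^ β - (β / 2) * (1 - t) ^ 2 := rfl
  rw [hFt] at this
  have hhalf : (α + 1) / (2 * (α + 2)) = β / 2 := by
    rw [hβ, div_div, mul_comm]
  rw [hhalf, hβ] at *
  linarith
end

section
/- Let α > -1 and t ∈ (0,1), and define A(s) := t(π+s) + (π/(α+1))·((1+s/π)^{-α-1} − (α+2)t^{(α+1)/(α+2)}) for s ≥ 0. Then for every s ≥ π(2^{1/(α+1)} t^{-1/(α+2)} − 1) one has A(s) ≥ (π/(α+1)) t^{(α+1)/(α+2)} ((α+1)2^{1/(α+1)} − α − 3/2) ≥ (π/(α+1)) t^{(α+1)/(α+2)} log(2/√e). -/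
open scoped Real

lemma bern_neg (u β : ℝ) (hu : 0 ≤ u) (hβ : 0 < β) : 1 - β * u ≤ (1 + u) ^ (-β) := by
  have h1u : (0:ℝ) < 1 + u := by linarith
  rcases le_or_gt (1 - β * u) 0 with h | h
  · exact h.trans (Real.rpow_pos_of_pos h1u _).le
  · have hP : (0:ℝ) < (1 + u) ^ β := Real.rpow_pos_of_pos h1u _
    have hlog : Real.log (1 + u) ≤ u := by
      have := Real.log_le_sub_one_of_pos h1u
      linarith
    have h2 : (1 + u) ^ β ≤ Real.exp (β * u) := by
      rw [Real.rpow_def_of_pos h1u]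
      exact Real.exp_le_exp.mpr (by nlinarith)
    have h3 : 1 - β * u ≤ Real.exp (-(β * u)) := by
      have := Real.add_one_le_exp (-(β * u))
      linarith
    have key : (1 - β * u) * (1 + u) ^ β ≤ 1 := by
      calc (1 - β * u) * (1 + u) ^ β ≤ Real.exp (-(β * u)) * Real.exp (β * u) :=
            mul_le_mul h3 h2 hP.le (Real.exp_pos _).le
        _ = 1 := by rw [← Real.exp_add]; simp
    rw [Real.rpow_neg h1u.le, ← one_div]
    exact (le_div_iff₀ hP).mpr key

/-- Lower bound for `A(s) = t(π+s) + (π/(α+1))((1+s/π)^{-α-1} - (α+2)t^{(α+1)/(α+2)})`: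
for `s ≥ π(2^{1/(α+1)}t^{-1/(α+2)} - 1)`,
`A(s) ≥ (π/(α+1))t^{(α+1)/(α+2)}((α+1)2^{1/(α+1)} - α - 3/2) ≥ (π/(α+1))t^{(α+1)/(α+2)} log(2/√e)`. -/
theorem stmt14 (α : ℝ) (hα : -1 < α) (t : ℝ) (ht : t ∈ Set.Ioo (0 : ℝ) 1)
    (s : ℝ) (hs : π * ((2 : ℝ) ^ ((1 : ℝ) / (α + 1)) * t ^ (-(1 / (α + 2))) - 1) ≤ s) :
    (π / (α + 1)) * t ^ ((α + 1) / (α + 2)) * Real.log (2 / Real.sqrt (Real.exp 1)) ≤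
      (π / (α + 1)) * t ^ ((α + 1) / (α + 2)) *
        ((α + 1) * (2 : ℝ) ^ ((1 : ℝ) / (α + 1)) - α - 3 / 2) ∧
    (π / (α + 1)) * t ^ ((α + 1) / (α + 2)) *
        ((α + 1) * (2 : ℝ) ^ ((1 : ℝ) / (α + 1)) - α - 3 / 2) ≤
      t * (π + s) +
        (π / (α + 1)) * ((1 + s / π) ^ (-α - 1) - (α + 2) * t ^ ((α + 1) / (α + 2))) := by
  obtain ⟨ht0, ht1⟩ := ht
  have hβ : (0:ℝ) < α + 1 := by linarith
  have hα2 : (0:ℝ) < α + 2 := by linarith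
  have hπ : (0:ℝ) < π := Real.pi_pos
  set T : ℝ := t ^ ((α + 1) / (α + 2)) with hTdef
  have hT : 0 < T := Real.rpow_pos_of_pos ht0 _
  set B : ℝ := (2 : ℝ) ^ ((1 : ℝ) / (α + 1)) with hBdef
  have hB : 0 < B := Real.rpow_pos_of_pos (by norm_num) _
  set a : ℝ := B * t ^ (-(1 / (α + 2))) with hadef
  have hta2 : (0:ℝ) < t ^ (-(1 / (α + 2))) := Real.rpow_pos_of_pos ht0 _
  have ha : 0 < a := mul_pos hB hta2
  set c : ℝ := (2:ℝ) ^ (-(α + 2) / (α + 1)) with hcdef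
  have hc0 : 0 < c := Real.rpow_pos_of_pos (by norm_num) _
  have hc1 : c ≤ 1 :=
    Real.rpow_le_one_of_one_le_of_nonpos (by norm_num)
      (div_nonpos_of_nonpos_of_nonneg (by linarith) hβ.le)
  -- a ^ (-(α+1)) = (1/2) * T
  have haβ : a ^ (-(α + 1)) = (1/2) * T := by
    rw [hadef, Real.mul_rpow hB.le hta2.le, hBdef,
      ← Real.rpow_mul (by norm_num : (0:ℝ) ≤ 2), ← Real.rpow_mul ht0.le,
      show (1:ℝ) / (α + 1) * -(α + 1) = -1 by field_simp,
      show -(1 / (α + 2)) * -(α + 1) = (α + 1)/(α+2) by field_simp]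
    rw [Real.rpow_neg_one]; norm_num
    exact hTdef.symm
  -- a ^ (-(α+2)) = c * t
  have hac : a ^ (-(α + 2)) = c * t := by
    rw [hadef, Real.mul_rpow hB.le hta2.le, hBdef, hcdef,
      ← Real.rpow_mul (by norm_num : (0:ℝ) ≤ 2), ← Real.rpow_mul ht0.le,
      show (1:ℝ) / (α + 1) * -(α + 2) = -(α+2)/(α+1) by field_simp,
      show -(1 / (α + 2)) * -(α + 2) = 1 by field_simp]
    rw [Real.rpow_one]
  -- t * a = B * T
  have hta : t * a = B * T := by
    rw [hadef, hTdef]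
    have : t * t ^ (-(1 / (α + 2))) = t ^ ((α + 1)/(α + 2)) := by
      nth_rewrite 1 [← Real.rpow_one t]
      rw [← Real.rpow_add ht0]
      congr 1
      field_simp
      ring
    rw [← this]; ring
  set x : ℝ := 1 + s / π with hxdef
  have hax : a ≤ x := by
    have h2 : a - 1 ≤ s / π := (le_div_iff₀ hπ).mpr (by linarith [hs])
    rw [hxdef]; linarith
  have hx0 : 0 < x := lt_of_lt_of_le ha hax
  -- Bernoulli tangent bound
  have F1 : (1/2) * T - (α + 1) * (c * t) * (x - a) ≤ x ^ (-(α + 1)) := by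
    set u : ℝ := (x - a) / a with hudef
    have hu : 0 ≤ u := div_nonneg (by linarith) ha.le
    have hxa : x = a * (1 + u) := by rw [hudef]; field_simp; ring
    have hber := bern_neg u (α + 1) hu hβ
    have hxpow : x ^ (-(α + 1)) = a ^ (-(α + 1)) * (1 + u) ^ (-(α + 1)) := by
      rw [hxa, Real.mul_rpow ha.le (by linarith)]
    have hmul : a ^ (-(α + 1)) * (1 - (α + 1) * u) ≤ x ^ (-(α + 1)) := by
      rw [hxpow]
      exact mul_le_mul_of_nonneg_left hber (Real.rpow_pos_of_pos ha _).le
    have hsplit : a ^ (-(α + 1)) * (1 - (α + 1) * u)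
        = (1/2) * T - (α + 1) * (c * t) * (x - a) := by
      have h1 : a ^ (-(α + 2)) = a ^ (-(α + 1)) * a⁻¹ := by
        rw [← Real.rpow_neg_one a, ← Real.rpow_add ha]
        norm_num
        ring_nf
      rw [haβ] at h1 ⊢
      rw [← hac, h1, hudef]
      field_simp
    rw [hsplit] at hmul
    exact hmul
  have F2 : π + s = π * x := by rw [hxdef]; field_simp
  have F3 : 0 ≤ x - a := by linarith
  constructor
  · -- first inequality
    have hlog2 : Real.log (2 / Real.sqrt (Real.exp 1)) = Real.log 2 - 1/2 := by
      rw [Real.log_div (by norm_num) (by positivity), Real.log_sqrt (Real.exp_pos 1).le,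
        Real.log_exp]
    have hBge : 1 + Real.log 2 / (α + 1) ≤ B := by
      rw [hBdef, Real.rpow_def_of_pos (by norm_num)]
      have := Real.add_one_le_exp (Real.log 2 * (1 / (α + 1)))
      have he : Real.log 2 * (1 / (α + 1)) = Real.log 2 / (α + 1) := by ring
      linarith [this, he ▸ this]
    have h1 : Real.log 2 - 1/2 ≤ (α + 1) * B - α - 3/2 := by
      have h := mul_le_mul_of_nonneg_left hBge hβ.le
      have he : (α + 1) * (1 + Real.log 2 / (α + 1)) = (α + 1) + Real.log 2 := by
        field_simp
      linarith [he ▸ h]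
    rw [hlog2]
    exact mul_le_mul_of_nonneg_left h1 (by positivity)
  · -- second inequality
    rw [show -α - 1 = -(α + 1) by ring]
    have key1 : (π / (α + 1)) * ((1/2) * T) - π * (c * t * (x - a))
        ≤ (π / (α + 1)) * x ^ (-(α + 1)) := by
      have h := mul_le_mul_of_nonneg_left F1 (div_pos hπ hβ).le
      have he : (π / (α + 1)) * ((1/2) * T - (α + 1) * (c * t) * (x - a))
          = (π / (α + 1)) * ((1/2) * T) - π * (c * t * (x - a)) := by
        field_simp
      linarith [he ▸ h]
    have key2 : c * (t * (x - a)) ≤ 1 * (t * (x - a)) :=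
      mul_le_mul_of_nonneg_right hc1 (mul_nonneg ht0.le F3)
    have e2 : t * (π + s) = π * (t * a) + π * (t * (x - a)) := by rw [F2]; ring
    have efin : (π / (α + 1)) * T * ((α + 1) * B - α - 3/2)
        = π * (B * T) + ((π / (α + 1)) * ((1/2) * T) - (π / (α + 1)) * ((α + 2) * T)) := by
      field_simp
      ring
    have hexp : (π / (α + 1)) * (x ^ (-(α + 1)) - (α + 2) * T)
        = (π / (α + 1)) * x ^ (-(α + 1)) - (π / (α + 1)) * ((α + 2) * T) := by ring
    rw [efin, hexp, e2, hta]
    clear_value T B a c x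
    linarith [key1, mul_le_mul_of_nonneg_left key2 hπ.le]
end

section
/- Let α > -1 and r ∈ [0,1). Then Σ_{k=2}^∞ k² r^{2k-2} · Γ(k+α+2)/(Γ(α+2)·k!) = (α+2)·(−1 + (1+(α+2)r²)(1−r²)^{-α-4}). -/
open Complex Finset in
lemma iter_cpow (γ : ℝ) (n : ℕ) : ∀ z ∈ Metric.ball (0:ℂ) 1,
    iteratedDeriv n (fun w : ℂ => (1 - w) ^ (-(γ:ℂ))) z
      = (∏ i ∈ range n, ((γ:ℂ) + i)) * (1 - z) ^ (-(γ:ℂ) - n) := by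
  induction n with
  | zero => intro z hz; simp
  | succ n ih =>
    intro z hz
    have hslit : ∀ w ∈ Metric.ball (0:ℂ) 1, 1 - w ∈ slitPlane := by
      intro w hw
      have : ‖-w‖ < 1 := by simpa using Metric.mem_ball.mp hw
      simpa [sub_eq_add_neg] using mem_slitPlane_of_norm_lt_one this
    rw [iteratedDeriv_succ]
    have heq : Set.EqOn (iteratedDeriv n (fun w : ℂ => (1 - w) ^ (-(γ:ℂ))))
        (fun w => (∏ i ∈ range n, ((γ:ℂ) + i)) * (1 - w) ^ (-(γ:ℂ) - n))
        (Metric.ball (0:ℂ) 1) := fun w hw => ih w hw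
    have hev : iteratedDeriv n (fun w : ℂ => (1 - w) ^ (-(γ:ℂ)))
        =ᶠ[nhds z] fun w => (∏ i ∈ range n, ((γ:ℂ) + i)) * (1 - w) ^ (-(γ:ℂ) - n) :=
      heq.eventuallyEq_of_mem (Metric.isOpen_ball.mem_nhds hz)
    rw [hev.deriv_eq]
    have hd : HasDerivAt (fun w : ℂ => (1 - w) ^ (-(γ:ℂ) - n))
        ((-(γ:ℂ) - n) * (1 - z) ^ (-(γ:ℂ) - n - 1) * (-1)) z := by
      have h1 : HasDerivAt (fun w : ℂ => 1 - w) (-1) z := by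
        simpa using (hasDerivAt_id z).const_sub 1
      exact h1.cpow_const (hslit z hz)
    have := (hd.const_mul (∏ i ∈ range n, ((γ:ℂ) + i))).deriv
    rw [this]
    have hexp : (-(γ:ℂ) - (n:ℂ) - 1) = -(γ:ℂ) - ((n:ℕ)+1 : ℕ) := by push_cast; ring
    rw [hexp, prod_range_succ]
    ring

lemma prod_eq_gamma (γ : ℝ) (hγ : 0 < γ) (n : ℕ) :
    ∏ i ∈ Finset.range n, (γ + i) = Real.Gamma (n + γ) / Real.Gamma γ := by
  induction n with
  | zero => simp [div_self (Real.Gamma_pos_of_pos hγ).ne']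
  | succ n ih =>
    rw [Finset.prod_range_succ, ih]
    have h1 : ((n + 1 : ℕ) : ℝ) + γ = ((n : ℝ) + γ) + 1 := by push_cast; ring
    rw [h1, Real.Gamma_add_one (by positivity : (n:ℝ) + γ ≠ 0)]
    field_simp
    ring

lemma hasSum_binom (γ : ℝ) (hγ : 0 < γ) {x : ℝ} (hx0 : 0 ≤ x) (hx1 : x < 1) :
    HasSum (fun k : ℕ => Real.Gamma (k + γ) / (Real.Gamma γ * (Nat.factorial k : ℝ)) * x ^ k)
      ((1 - x) ^ (-γ)) := by
  have hdiff : DifferentiableOn ℂ (fun w : ℂ => (1 - w) ^ (-(γ:ℂ))) (Metric.ball 0 1) := by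
    intro z hz
    have hn : ‖-z‖ < 1 := by simpa using Metric.mem_ball.mp hz
    have hslit : 1 - z ∈ Complex.slitPlane := by
      simpa [sub_eq_add_neg] using Complex.mem_slitPlane_of_norm_lt_one hn
    have h1 : HasDerivAt (fun w : ℂ => 1 - w) (-1) z := by
      simpa using (hasDerivAt_id z).const_sub 1
    exact (h1.cpow_const hslit).differentiableAt.differentiableWithinAt
  have hz : (x:ℂ) ∈ Metric.ball (0:ℂ) 1 := by
    simp only [Metric.mem_ball, dist_zero_right, Complex.norm_real, Real.norm_eq_abs]
    rwa [abs_of_nonneg hx0]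
  have H := Complex.hasSum_taylorSeries_on_ball hdiff hz
  have h0 : (0:ℂ) ∈ Metric.ball (0:ℂ) 1 := by simp
  have hterm : ∀ n : ℕ,
      ((Real.Gamma (n + γ) / (Real.Gamma γ * (Nat.factorial n : ℝ)) * x ^ n : ℝ) : ℂ)
        = ((Nat.factorial n : ℂ))⁻¹ • ((x:ℂ) - 0) ^ n •
            iteratedDeriv n (fun w : ℂ => (1 - w) ^ (-(γ:ℂ))) 0 := by
    intro n
    rw [iter_cpow γ n 0 h0]
    rw [show ((1:ℂ) - 0) = 1 by ring, Complex.one_cpow]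
    rw [show (∏ i ∈ Finset.range n, ((γ:ℂ) + i)) = ((∏ i ∈ Finset.range n, (γ + i) : ℝ) : ℂ) by
      push_cast; rfl]
    rw [prod_eq_gamma γ hγ n]
    push_cast
    simp only [smul_eq_mul, sub_zero]
    ring
  have hfx : ((1:ℂ) - (x:ℂ)) ^ (-(γ:ℂ)) = (((1 - x) ^ (-γ) : ℝ) : ℂ) := by
    rw [Complex.ofReal_cpow (by linarith) (-γ)]
    push_cast
    rfl
  exact Complex.hasSum_ofReal.mp (by simpa only [hterm, ← hfx] using H)

/-- Power series identity: `Σ_{k≥2} k² r^{2k-2} Γ(k+α+2)/(Γ(α+2) k!)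
= (α+2)(-1 + (1+(α+2)r²)(1-r²)^{-α-4})` (summation index shifted by 2). -/
theorem stmt17 (α : ℝ) (hα : -1 < α) (r : ℝ) (hr : r ∈ Set.Ico (0 : ℝ) 1) :
    (∑' k : ℕ, ((k : ℝ) + 2) ^ 2 * r ^ (2 * k + 2) *
        (Real.Gamma ((k : ℝ) + 2 + α + 2) /
          (Real.Gamma (α + 2) * (Nat.factorial (k + 2) : ℝ)))) =
      (α + 2) * (-1 + (1 + (α + 2) * r ^ 2) * (1 - r ^ 2) ^ (-α - 4)) := by
  obtain ⟨hr0, hr1⟩ := hr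
  set β := α + 2 with hβdef
  have hβ : 1 < β := by simp only [hβdef]; linarith
  by_cases hrz : r = 0
  · subst hrz
    have h0 : ∀ k : ℕ, ((k : ℝ) + 2) ^ 2 * (0:ℝ) ^ (2 * k + 2) *
        (Real.Gamma ((k : ℝ) + 2 + α + 2) /
          (Real.Gamma (α + 2) * (Nat.factorial (k + 2) : ℝ))) = 0 := by
      intro k
      rw [zero_pow (by omega)]
      ring
    rw [tsum_congr h0, tsum_zero]
    norm_num [Real.one_rpow]
  · have hrpos : 0 < r := lt_of_le_of_ne hr0 (Ne.symm hrz)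
    set x := r ^ 2 with hxdef
    have hx0 : 0 < x := by positivity
    have hx1 : x < 1 := by nlinarith
    have hy : 0 < 1 - x := by linarith
    have key : ∀ γ : ℝ, 0 < γ →
        HasSum (fun k : ℕ => Real.Gamma (((k+2 : ℕ) : ℝ) + γ) /
            (Real.Gamma γ * ((Nat.factorial (k+2)) : ℝ)) * x ^ (k+2))
          ((1 - x) ^ (-γ) - (1 + γ * x)) := by
      intro γ hγ
      have hΓ : Real.Gamma γ ≠ 0 := (Real.Gamma_pos_of_pos hγ).ne'
      have H := hasSum_binom γ hγ hx0.le hx1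
      have H2 := (hasSum_nat_add_iff' 2).mpr H
      have hsum2 : (∑ i ∈ Finset.range 2,
          Real.Gamma ((i:ℝ) + γ) / (Real.Gamma γ * ((Nat.factorial i) : ℝ)) * x ^ i)
            = 1 + γ * x := by
        rw [Finset.sum_range_succ, Finset.sum_range_one]
        have h1γ : Real.Gamma ((1:ℝ) + γ) = γ * Real.Gamma γ := by
          rw [add_comm, Real.Gamma_add_one hγ.ne']
        norm_num [Nat.factorial, h1γ]
        field_simp
      rwa [hsum2] at H2
    have Hb := key β (by linarith)
    have Hb1 := key (β+1) (by linarith)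
    have Hb2 := key (β+2) (by linarith)
    have comb := (((Hb2.mul_left (β*(β+1))).sub (Hb1.mul_left (β*(2*β+1)))).add
      (Hb.mul_left (β^2))).div_const x
    have hfun : ∀ k : ℕ, ((k : ℝ) + 2) ^ 2 * r ^ (2 * k + 2) *
        (Real.Gamma ((k : ℝ) + 2 + α + 2) /
          (Real.Gamma (α + 2) * (Nat.factorial (k + 2) : ℝ))) =
        (β*(β+1) * (Real.Gamma (((k+2 : ℕ) : ℝ) + (β+2)) /
            (Real.Gamma (β+2) * ((Nat.factorial (k+2)) : ℝ)) * x ^ (k+2))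
          - β*(2*β+1) * (Real.Gamma (((k+2 : ℕ) : ℝ) + (β+1)) /
            (Real.Gamma (β+1) * ((Nat.factorial (k+2)) : ℝ)) * x ^ (k+2))
          + β^2 * (Real.Gamma (((k+2 : ℕ) : ℝ) + β) /
            (Real.Gamma β * ((Nat.factorial (k+2)) : ℝ)) * x ^ (k+2))) / x := by
      intro k
      set t : ℝ := (k : ℝ) + 2 + β with htdef
      have ht : 0 < t := by positivity
      have harg0 : ((k+2 : ℕ) : ℝ) + β = t := by push_cast [htdef]; ring
      have harg1 : ((k+2 : ℕ) : ℝ) + (β+1) = t + 1 := by push_cast [htdef]; ring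
      have harg2 : ((k+2 : ℕ) : ℝ) + (β+2) = (t + 1) + 1 := by push_cast [htdef]; ring
      have hargα : (k : ℝ) + 2 + α + 2 = t := by rw [htdef, hβdef]; ring
      rw [harg0, harg1, harg2, hargα]
      rw [Real.Gamma_add_one (by positivity : t + 1 ≠ 0),
        Real.Gamma_add_one (by positivity : t ≠ 0)]
      have hΓβ1 : Real.Gamma (β+1) = β * Real.Gamma β :=
        Real.Gamma_add_one (by linarith)
      have hΓβ2 : Real.Gamma (β+2) = (β+1) * (β * Real.Gamma β) := by
        rw [show β + 2 = (β+1) + 1 by ring, Real.Gamma_add_one (by linarith), hΓβ1]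
      rw [hΓβ1, hΓβ2, hβdef.symm]
      have hrx : r ^ (2*k+2) = x ^ (k+1) := by
        rw [hxdef, ← pow_mul]
        congr 1
      have hxp : x ^ (k+2) = x * x^(k+1) := by ring
      rw [hrx, hxp]
      have hΓβ : Real.Gamma β ≠ 0 := (Real.Gamma_pos_of_pos (by linarith)).ne'
      have hfac : ((Nat.factorial (k+2)) : ℝ) ≠ 0 := by positivity
      field_simp
      ring
    rw [tsum_congr hfun, comb.tsum_eq]
    have hA1 : (1-x) ^ (-(β+1)) = (1-x) ^ (-(β+2)) * (1-x) := by
      rw [show -(β+1) = -(β+2) + 1 by ring, Real.rpow_add hy, Real.rpow_one]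
    have hA2 : (1-x) ^ (-β) = (1-x) ^ (-(β+2)) * (1-x)^(2:ℕ) := by
      rw [show -β = -(β+2) + 2 by ring, Real.rpow_add hy,
        show ((2:ℝ)) = ((2:ℕ):ℝ) by norm_num, Real.rpow_natCast]
    have hexp : -α - 4 = -(β+2) := by rw [hβdef]; ring
    rw [hA1, hA2, hexp]
    field_simp
    ring
end

section
/- Let α > -1, t₀ ∈ (0,1), δ ∈ [0, t₀/√3] and x ∈ [1, 1/t₀]. Then x^{1/(α+2)}·(1 + 2δ²/t₀) − 2δ²/t₀ ≥ ((1−δ²)/(1/x − δ²))^{1/(α+2)}. (Note that 1/x − δ² ≥ t₀ − t₀²/3 > 0, so the right-hand side is well defined.) -/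
/-- Elementary inequality: for `α > -1`, `t₀ ∈ (0,1)`, `δ ∈ [0, t₀/√3]`, `x ∈ [1, 1/t₀]`,
`x^{1/(α+2)}(1 + 2δ²/t₀) - 2δ²/t₀ ≥ ((1-δ²)/(1/x - δ²))^{1/(α+2)}`. -/
theorem stmt19 (α : ℝ) (hα : -1 < α) (t₀ : ℝ) (ht₀ : t₀ ∈ Set.Ioo (0 : ℝ) 1)
    (δ : ℝ) (hδ : δ ∈ Set.Icc (0 : ℝ) (t₀ / Real.sqrt 3))
    (x : ℝ) (hx : x ∈ Set.Icc (1 : ℝ) (1 / t₀)) :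
    ((1 - δ ^ 2) / (1 / x - δ ^ 2)) ^ ((1 : ℝ) / (α + 2)) ≤
      x ^ ((1 : ℝ) / (α + 2)) * (1 + 2 * δ ^ 2 / t₀) - 2 * δ ^ 2 / t₀ := by
  obtain ⟨ht1, ht2⟩ := ht₀
  obtain ⟨hδ1, hδ2⟩ := hδ
  obtain ⟨hx1, hx2⟩ := hx
  set p : ℝ := 1 / (α + 2) with hpdef
  have hα2 : (0:ℝ) < α + 2 := by linarith
  have hp0 : 0 < p := by positivity
  have hp1 : p ≤ 1 := by
    rw [hpdef, div_le_one hα2]; linarith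
  have hx0 : (0:ℝ) < x := lt_of_lt_of_le one_pos hx1
  have hδsq : δ ^ 2 ≤ t₀ ^ 2 / 3 := by
    have h3 : Real.sqrt 3 ^ 2 = 3 := Real.sq_sqrt (by norm_num)
    have := pow_le_pow_left₀ hδ1 hδ2 2
    rw [div_pow, h3] at this
    exact this
  have hxδ : x * δ ^ 2 ≤ t₀ / 3 := by
    have : x * δ ^ 2 ≤ (1 / t₀) * (t₀ ^ 2 / 3) := by
      apply mul_le_mul hx2 hδsq (sq_nonneg δ) (by positivity)
    calc x * δ ^ 2 ≤ (1 / t₀) * (t₀ ^ 2 / 3) := this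
      _ = t₀ / 3 := by field_simp
  have h1 : 0 < 1 - x * δ ^ 2 := by nlinarith
  have hδ2' : δ ^ 2 ≤ 1 := by nlinarith [sq_nonneg δ]
  -- rewrite base
  have hdpos : (0:ℝ) < 1 / x - δ ^ 2 := by
    rw [show 1 / x - δ ^ 2 = (1 - x * δ ^ 2) / x by field_simp]
    positivity
  have hA : (1 - δ ^ 2) / (1 / x - δ ^ 2) = x * ((1 - δ ^ 2) / (1 - x * δ ^ 2)) := by
    have h2 := hdpos.ne'
    have h3 := h1.ne'
    field_simp
  set B : ℝ := (1 - δ ^ 2) / (1 - x * δ ^ 2) with hBdef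
  have hB1 : 1 ≤ B := by
    rw [hBdef, le_div_iff₀ h1]; nlinarith [sq_nonneg δ]
  have hB0 : 0 ≤ B := by linarith
  rw [hA, Real.mul_rpow hx0.le hB0]
  set c : ℝ := x ^ p with hcdef
  have hc1 : 1 ≤ c := Real.one_le_rpow hx1 hp0.le
  have hc0 : 0 < c := by linarith
  -- Bernoulli on B
  have hBern : B ^ p ≤ 1 + p * (B - 1) := by
    have := rpow_one_add_le_one_add_mul_self (s := B - 1) (by linarith) hp0.le hp1
    simpa using this
  -- Bernoulli on 1/x
  have hxinv : (-1:ℝ) ≤ 1/x - 1 := by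
    have h0 : (0:ℝ) < 1/x := by positivity
    linarith
  have hinv : (1/x) ^ p ≤ 1 + p * (1/x - 1) := by
    have := rpow_one_add_le_one_add_mul_self (s := 1/x - 1) hxinv hp0.le hp1
    simpa using this
  have hprod : c * (1/x) ^ p = 1 := by
    rw [hcdef, ← Real.mul_rpow hx0.le (by positivity), mul_one_div_cancel hx0.ne',
      Real.one_rpow]
  -- hence c - 1 ≥ p * c * (x-1)/x
  have hkey : p * c * (x - 1) / x ≤ c - 1 := by
    have h := mul_le_mul_of_nonneg_left hinv hc0.le
    rw [hprod] at h
    have : c * (1 + p * (1/x - 1)) = c - p * c * (x - 1) / x := by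
      field_simp; ring
    rw [this] at h
    linarith
  have hBm1 : B - 1 = δ ^ 2 * (x - 1) / (1 - x * δ ^ 2) := by
    rw [hBdef, div_sub_one h1.ne']; ring
  -- main comparison
  have hmain : c * (p * (B - 1)) ≤ 2 * δ ^ 2 / t₀ * (c - 1) := by
    have step1 : c * (p * (B - 1)) = c * p * (δ ^ 2 * (x - 1)) / (1 - x * δ ^ 2) := by
      rw [hBm1]; field_simp
    have step2 : c * p * (δ ^ 2 * (x - 1)) / (1 - x * δ ^ 2) ≤
        2 * δ ^ 2 / t₀ * (p * c * (x - 1) / x) := by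
      rw [div_le_iff₀ h1]
      have hnum : 2 * δ ^ 2 / t₀ * (p * c * (x - 1) / x) =
          (2 * δ ^ 2 * p * c * (x - 1)) / (t₀ * x) := by field_simp
      rw [hnum, div_mul_eq_mul_div, le_div_iff₀ (by positivity)]
      have hfac : 0 ≤ p * c * δ ^ 2 * (x - 1) := by
        have : 0 ≤ x - 1 := by linarith
        positivity
      have ht0x : t₀ * x ≤ 1 := by
        have h := mul_le_mul_of_nonneg_left hx2 ht1.le
        rwa [mul_one_div_cancel ht1.ne'] at h
      have h3 : t₀ * x ≤ 2 - 2 * (x * δ ^ 2) := by linarith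
      calc c * p * (δ ^ 2 * (x - 1)) * (t₀ * x)
          = (p * c * δ ^ 2 * (x - 1)) * (t₀ * x) := by ring
        _ ≤ (p * c * δ ^ 2 * (x - 1)) * (2 - 2 * (x * δ ^ 2)) :=
            mul_le_mul_of_nonneg_left h3 hfac
        _ = 2 * δ ^ 2 * p * c * (x - 1) * (1 - x * δ ^ 2) := by ring
    have step3 : 2 * δ ^ 2 / t₀ * (p * c * (x - 1) / x) ≤ 2 * δ ^ 2 / t₀ * (c - 1) :=
      mul_le_mul_of_nonneg_left hkey (show (0:ℝ) ≤ 2 * δ ^ 2 / t₀ by positivity)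
    linarith [step1 ▸ le_trans step2 step3]
  calc c * B ^ p ≤ c * (1 + p * (B - 1)) := by
        apply mul_le_mul_of_nonneg_left hBern hc0.le
    _ = c + c * (p * (B - 1)) := by ring
    _ ≤ c + 2 * δ ^ 2 / t₀ * (c - 1) := by linarith
    _ = c * (1 + 2 * δ ^ 2 / t₀) - 2 * δ ^ 2 / t₀ := by ring
end
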